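/- Let μ and ν be complex Borel measures on ℝ, and let F and G be left-continuous distribution functions of μ and ν respectively (i.e. F(y) - F(x) = μ([x,y)) and similarly for G, for x < y). Then for all x ≤ y, ∫_{[x,y)} F(s) dν(s) = F(y)G(y) - F(x)G(x) - ∫_{[x,y)} G(s+) dμ(s), where G(s+) denotes the right-hand limit of G at s. -/

import Mathlib

/-!
On `[x, y)` the hypotheses give `F s = F x + μ [x, s)` and `G (s+) = G y - ν (s, y)`, so after
expanding both integrals the identity reduces to
`∫_{[x,y)} μ [x, s) dν(s) = ∫_{[x,y)} ν (t, y) dμ(t)`.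
For positive finite measures both sides are the `μ × ν`-mass of the triangle
`{(t, s) | x ≤ t < s < y}` (Tonelli); the complex case follows by bilinearity, splitting each
complex measure into the four Jordan parts of its real and imaginary parts.
-/

open MeasureTheory Set Filter

/-- Integral of a complex-valued function against a real (signed) Borel measure. -/
noncomputable def sInt (m : MeasureTheory.SignedMeasure ℝ) (f : ℝ → ℂ) (s : Set ℝ) : ℂ :=
  (∫ x in s, f x ∂m.toJordanDecomposition.posPart) -
    ∫ x in s, f x ∂m.toJordanDecomposition.negPart

/-- Integral of a complex-valued function against a complex Borel measure. -/
noncomputable def cInt (m : MeasureTheory.ComplexMeasure ℝ) (f : ℝ → ℂ) (s : Set ℝ) : ℂ :=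
  sInt (MeasureTheory.ComplexMeasure.re m) f s +
    Complex.I * sInt (MeasureTheory.ComplexMeasure.im m) f s

/-- `f`, with left-continuous locally-BV derivative representative `f'`, is a solution of the
measure differential equation `-f'' + (1/4) f = z ω f + z² υ f + χ` in the integrated sense. -/
def IsSol (ω : MeasureTheory.SignedMeasure ℝ) (υ : MeasureTheory.Measure ℝ)
    (χ : MeasureTheory.ComplexMeasure ℝ) (z : ℂ) (f f' : ℝ → ℂ) : Prop :=
  Continuous f ∧
  (∀ x y : ℝ, f y - f x = ∫ s in x..y, f' s) ∧
  (∀ x : ℝ, Filter.Tendsto f' (nhdsWithin x (Set.Iio x)) (nhds (f' x))) ∧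
  LocallyBoundedVariationOn f' Set.univ ∧
  ∀ x y : ℝ, x ≤ y →
    -f' y + f' x + (1 / 4 : ℂ) * ∫ s in x..y, f s
      = z * sInt ω f (Set.Ico x y) + z ^ 2 * (∫ s in Set.Ico x y, f s ∂υ)
        + χ (Set.Ico x y)

open scoped Topology

theorem setLIntegral_measure_Ico_eq_setLIntegral_measure_Ioo (α β : Measure ℝ) [SFinite α]
    [SFinite β] (x y : ℝ) :
    ∫⁻ s in Ico x y, α (Ico x s) ∂β = ∫⁻ t in Ico x y, β (Ioo t y) ∂α := by
  have hU : MeasurableSet {p : ℝ × ℝ | p.1 < p.2 ∧ p.2 < y} := by measurability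
  have hV : MeasurableSet {p : ℝ × ℝ | x ≤ p.1 ∧ p.1 < p.2} := by measurability
  have hβ : α.prod (β.restrict (Ico x y)) = (α.prod β).restrict (univ ×ˢ Ico x y) := by
    rw [← Measure.prod_restrict, Measure.restrict_univ]
  calc ∫⁻ s in Ico x y, α (Ico x s) ∂β
      = (α.prod β) ({p | x ≤ p.1 ∧ p.1 < p.2} ∩ univ ×ˢ Ico x y) := by
        rw [← Measure.restrict_apply hV, ← hβ, Measure.prod_apply_symm hV]; rfl
    _ = (α.prod β) ({p | p.1 < p.2 ∧ p.2 < y} ∩ Ico x y ×ˢ univ) := by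
        congr 1
        ext ⟨t, s⟩
        simp only [mem_inter_iff, mem_ofPred_eq, mem_prod, mem_univ, mem_Ico]
        grind
    _ = ∫⁻ t in Ico x y, β (Ioo t y) ∂α := by
        rw [← Measure.restrict_apply hU, ← Measure.restrict_prod_eq_prod_univ,
          Measure.prod_apply hU]; rfl

theorem setIntegral_measureReal_Ico_eq_setIntegral_measureReal_Ioo (α β : Measure ℝ)
    [IsFiniteMeasure α] [IsFiniteMeasure β] (x y : ℝ) :
    ∫ s in Ico x y, α.real (Ico x s) ∂β = ∫ t in Ico x y, β.real (Ioo t y) ∂α := by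
  have hα : Measurable fun s => α (Ico x s) :=
    Monotone.measurable fun _ _ h => measure_mono (Ico_subset_Ico_right h)
  have hβ : Measurable fun t => β (Ioo t y) :=
    Antitone.measurable fun _ _ h => measure_mono (Ioo_subset_Ioo_left h)
  simp only [measureReal_def]
  rw [integral_toReal hα.aemeasurable (ae_of_all _ fun _ => measure_lt_top _ _),
    integral_toReal hβ.aemeasurable (ae_of_all _ fun _ => measure_lt_top _ _),
    setLIntegral_measure_Ico_eq_setLIntegral_measure_Ioo]

namespace MeasureTheory.ComplexMeasure

variable {X : Type*} [MeasurableSpace X]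

noncomputable def jordanPart (m : ComplexMeasure X) : Fin 4 → Measure X :=
  ![(re m).toJordanDecomposition.posPart, (re m).toJordanDecomposition.negPart,
    (im m).toJordanDecomposition.posPart, (im m).toJordanDecomposition.negPart]

def jordanCoeff : Fin 4 → ℂ := ![1, -1, Complex.I, -Complex.I]

instance (m : ComplexMeasure X) (i : Fin 4) : IsFiniteMeasure (m.jordanPart i) := by
  fin_cases i <;> dsimp [jordanPart] <;> infer_instance

theorem apply_eq_sum_jordanPart (m : ComplexMeasure X) {S : Set X} (hS : MeasurableSet S) :
    m S = ∑ i, jordanCoeff i * (m.jordanPart i).real S := by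
  rw [show m S = (re m S : ℂ) + im m S * Complex.I from (Complex.re_add_im _).symm,
    SignedMeasure.apply_eq_posPart_real_sub_negPart_real _ hS,
    SignedMeasure.apply_eq_posPart_real_sub_negPart_real _ hS]
  simp [Fin.sum_univ_four, jordanPart, jordanCoeff]
  ring

end MeasureTheory.ComplexMeasure

open ComplexMeasure

theorem measurableSet_snd_mem_Ico_fst (x : ℝ) : MeasurableSet {p : ℝ × ℝ | p.2 ∈ Ico x p.1} := by
  measurability

theorem measurableSet_snd_mem_Ioo_fst (y : ℝ) : MeasurableSet {p : ℝ × ℝ | p.2 ∈ Ioo p.1 y} := by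
  measurability

section Sections

variable {A : ℝ → Set ℝ} (hA : MeasurableSet {p : ℝ × ℝ | p.2 ∈ A p.1})
include hA

theorem integrable_measureReal_section (ρ κ : Measure ℝ) [IsFiniteMeasure ρ] [IsFiniteMeasure κ] :
    Integrable (fun s => ρ.real (A s)) κ := by
  refine .of_bound (measurable_measure_prodMk_left hA).ennreal_toReal.aestronglyMeasurable
    (ρ.real univ) (ae_of_all _ fun s => ?_)
  rw [Real.norm_of_nonneg measureReal_nonneg]
  exact measureReal_mono (subset_univ _)

theorem integrable_complexMeasure_section (m : ComplexMeasure ℝ) (κ : Measure ℝ)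
    [IsFiniteMeasure κ] : Integrable (fun s => m (A s)) κ := by
  have hAs (s : ℝ) : MeasurableSet (A s) := measurable_prodMk_left hA
  simp only [m.apply_eq_sum_jordanPart (hAs _)]
  exact integrable_finsetSum _ fun i _ =>
    (integrable_measureReal_section hA _ _).ofReal.const_mul _

theorem setIntegral_complexMeasure_section (m : ComplexMeasure ℝ) (κ : Measure ℝ)
    [IsFiniteMeasure κ] (S : Set ℝ) :
    ∫ s in S, m (A s) ∂κ = ∑ i, jordanCoeff i * ∫ s in S, (m.jordanPart i).real (A s) ∂κ := by
  have hAs (s : ℝ) : MeasurableSet (A s) := measurable_prodMk_left hA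
  simp only [m.apply_eq_sum_jordanPart (hAs _)]
  rw [integral_finsetSum _ fun i _ =>
    ((integrable_measureReal_section hA _ _).ofReal.const_mul _).restrict]
  simp only [integral_const_mul, integral_complex_ofReal]

end Sections

section cInt

variable {m : ComplexMeasure ℝ} {f g : ℝ → ℂ} {S : Set ℝ}

theorem cInt_eq_sum :
    cInt m f S = ∑ i, jordanCoeff i * ∫ x in S, f x ∂(m.jordanPart i) := by
  simp [cInt, sInt, Fin.sum_univ_four, jordanPart, jordanCoeff]
  ring

theorem cInt_congr (hS : MeasurableSet S) (h : EqOn f g S) : cInt m f S = cInt m g S := by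
  simp only [cInt_eq_sum, setIntegral_congr_fun hS h]

theorem cInt_const (hS : MeasurableSet S) (c : ℂ) : cInt m (fun _ => c) S = m S * c := by
  simp only [cInt_eq_sum, setIntegral_const, m.apply_eq_sum_jordanPart hS, Finset.sum_mul,
    Complex.real_smul, mul_assoc]

theorem cInt_add (hf : ∀ i, IntegrableOn f S (m.jordanPart i))
    (hg : ∀ i, IntegrableOn g S (m.jordanPart i)) :
    cInt m (fun s => f s + g s) S = cInt m f S + cInt m g S := by
  simp only [cInt_eq_sum, integral_add (hf _) (hg _), mul_add, Finset.sum_add_distrib]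

theorem cInt_sub (hf : ∀ i, IntegrableOn f S (m.jordanPart i))
    (hg : ∀ i, IntegrableOn g S (m.jordanPart i)) :
    cInt m (fun s => f s - g s) S = cInt m f S - cInt m g S := by
  simp only [cInt_eq_sum, integral_sub (hf _) (hg _), mul_sub, Finset.sum_sub_distrib]

end cInt

theorem cInt_measure_Ico_eq_cInt_measure_Ioo (μ ν : ComplexMeasure ℝ) (x y : ℝ) :
    cInt ν (fun s => μ (Ico x s)) (Ico x y) = cInt μ (fun t => ν (Ioo t y)) (Ico x y) := by
  simp only [cInt_eq_sum, setIntegral_complexMeasure_section (measurableSet_snd_mem_Ico_fst x),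
    setIntegral_complexMeasure_section (A := fun t => Ioo t y) (measurableSet_snd_mem_Ioo_fst y),
    setIntegral_measureReal_Ico_eq_setIntegral_measureReal_Ioo, Finset.mul_sum]
  rw [Finset.sum_comm]
  simp only [mul_left_comm]

section DistributionFunction

variable {M : Type*} [AddCommGroup M] [TopologicalSpace M] {v : VectorMeasure ℝ M} {F : ℝ → M}
  (hF : ∀ x y, x < y → F y - F x = v (Ico x y))
include hF

theorem sub_eq_measure_Ico_of_le {x y : ℝ} (h : x ≤ y) : F y - F x = v (Ico x y) := by
  rcases h.eq_or_lt with rfl | h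
  · simp
  · exact hF x y h

theorem eq_sub_measure_Ioo_of_tendsto_nhdsGT [T2Space M] [ContinuousSub M] {t y : ℝ} {a : M}
    (ha : Tendsto F (𝓝[>] t) (𝓝 a)) (hty : t < y) : a = F y - v (Ioo t y) := by
  obtain ⟨u, hu_anti, hu_mem, hu_lim⟩ := exists_seq_strictAnti_tendsto' hty
  have hu : Tendsto u atTop (𝓝[>] t) :=
    tendsto_nhdsWithin_iff.2 ⟨hu_lim, .of_forall fun n => (hu_mem n).1⟩
  have hunion : ⋃ n, Ico (u n) y = Ioo t y := by
    ext s
    simp only [mem_iUnion, mem_Ico, mem_Ioo]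
    constructor
    · rintro ⟨n, hus, hsy⟩
      exact ⟨(hu_mem n).1.trans_le hus, hsy⟩
    · rintro ⟨hts, hsy⟩
      obtain ⟨n, hn⟩ := (hu_lim.eventually (gt_mem_nhds hts)).exists
      exact ⟨n, hn.le, hsy⟩
  have hv : Tendsto (fun n => v (Ico (u n) y)) atTop (𝓝 (v (Ioo t y))) := hunion ▸
    VectorMeasure.tendsto_vectorMeasure_iUnion_atTop_nat
      (fun _ _ h => Ico_subset_Ico_left (hu_anti.antitone h)) fun _ => measurableSet_Ico
  have hFu : ∀ n, F y - v (Ico (u n) y) = F (u n) := fun n => by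
    rw [← hF _ _ (hu_mem n).2, sub_sub_cancel]
  exact tendsto_nhds_unique (ha.comp hu) ((tendsto_const_nhds.sub hv).congr hFu)

end DistributionFunction

theorem integration_by_parts_general (μ ν : MeasureTheory.ComplexMeasure ℝ) (F G Gp : ℝ → ℂ)
    (hF : ∀ x y : ℝ, x < y → F y - F x = μ (Set.Ico x y))
    (hG : ∀ x y : ℝ, x < y → G y - G x = ν (Set.Ico x y))
    (hGp : ∀ s : ℝ, Filter.Tendsto G (nhdsWithin s (Set.Ioi s)) (nhds (Gp s))) :
    ∀ x y : ℝ, x ≤ y →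
      cInt ν F (Set.Ico x y)
        = F y * G y - F x * G x - cInt μ Gp (Set.Ico x y) := by
  intro x y hxy
  have hF' : EqOn F (fun s => F x + μ (Ico x s)) (Ico x y) := fun s hs =>
    eq_add_of_sub_eq' (sub_eq_measure_Ico_of_le hF hs.1)
  have hGp' : EqOn Gp (fun t => G y - ν (Ioo t y)) (Ico x y) := fun t ht =>
    eq_sub_measure_Ioo_of_tendsto_nhdsGT hG (hGp t) ht.2
  rw [cInt_congr measurableSet_Ico hF', cInt_congr measurableSet_Ico hGp',
    cInt_add (fun _ => integrableOn_const) fun _ =>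
      (integrable_complexMeasure_section (measurableSet_snd_mem_Ico_fst x) μ _).integrableOn,
    cInt_sub (fun _ => integrableOn_const) fun _ =>
      (integrable_complexMeasure_section (A := fun t => Ioo t y)
        (measurableSet_snd_mem_Ioo_fst y) ν _).integrableOn,
    cInt_const measurableSet_Ico, cInt_const measurableSet_Ico,
    cInt_measure_Ico_eq_cInt_measure_Ioo]
  linear_combination (-G y) * sub_eq_measure_Ico_of_le hF hxy -
    F x * sub_eq_measure_Ico_of_le hG hxy

/-- Integration by parts for Borel measures: if `F`, `G` are left-continuous distribution
functions of the complex measures `μ`, `ν` and `Gp` is the right-limit function of `G`, then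
`∫_{[x,y)} F dν = F(y)G(y) - F(x)G(x) - ∫_{[x,y)} G(s+) dμ(s)` for all `x ≤ y`. -/
theorem integration_by_parts (μ ν : MeasureTheory.ComplexMeasure ℝ) (F G Gp : ℝ → ℂ)
    (hF : ∀ x y : ℝ, x < y → F y - F x = μ (Set.Ico x y))
    (hG : ∀ x y : ℝ, x < y → G y - G x = ν (Set.Ico x y))
    (hFlc : ∀ s : ℝ, Filter.Tendsto F (nhdsWithin s (Set.Iio s)) (nhds (F s)))
    (hGlc : ∀ s : ℝ, Filter.Tendsto G (nhdsWithin s (Set.Iio s)) (nhds (G s)))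
    (hGp : ∀ s : ℝ, Filter.Tendsto G (nhdsWithin s (Set.Ioi s)) (nhds (Gp s))) :
    ∀ x y : ℝ, x ≤ y →
      cInt ν F (Set.Ico x y)
        = F y * G y - F x * G x - cInt μ Gp (Set.Ico x y) :=
  integration_by_parts_general μ ν F G Gp hF hG hGp
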